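/- arXiv:1905.13507 — 7 statements merged into one kernel-verified Lean document; each statement's English description precedes it below -/
import Mathlib

section
/- Let X be a complete metric space, n ∈ ℕ, and f_1,...,f_n : X → X contractions (Lipschitz constant < 1). Then there exists a unique nonempty compact set A ⊆ X such that A = ⋃_{i=1}^n f_i(A). -/
/-!
The Hutchinson operator `A ↦ ⋃ i, f i '' A` maps nonempty compact sets to nonempty compact sets,
and a family of `K`-Lipschitz maps makes it `K`-Lipschitz for the Hausdorff distance. The space
of nonempty compact subsets of a complete space is complete, so for `K < 1` the Banach fixed
point theorem gives the attractor as the unique fixed point.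
-/

open scoped NNReal ENNReal
open Set Metric Function

section Lipschitz

variable {X Y : Type*} [PseudoEMetricSpace X] [PseudoEMetricSpace Y] {K : ℝ≥0} {f : X → Y}

theorem LipschitzWith.infEDist_image_le (hf : LipschitzWith K f) (x : X) {t : Set X}
    (ht : t.Nonempty) : infEDist (f x) (f '' t) ≤ K * infEDist x t := by
  have : Nonempty t := ht.to_subtype
  calc infEDist (f x) (f '' t) ≤ ⨅ y : t, K * edist x y :=
        le_iInf fun y => (infEDist_le_edist_of_mem (mem_image_of_mem f y.2)).trans (hf x y)
    _ = K * infEDist x t := by rw [infEDist, iInf_subtype', ENNReal.mul_iInf (by simp)]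

theorem LipschitzWith.hausdorffEDist_image_le (hf : LipschitzWith K f) {s t : Set X}
    (hs : s.Nonempty) (ht : t.Nonempty) :
    hausdorffEDist (f '' s) (f '' t) ≤ K * hausdorffEDist s t := by
  refine hausdorffEDist_le_of_infEDist ?_ ?_ <;> rintro _ ⟨x, hx, rfl⟩
  · grw [hf.infEDist_image_le x ht, infEDist_le_hausdorffEDist_of_mem hx]
  · grw [hf.infEDist_image_le x hs, infEDist_le_hausdorffEDist_of_mem hx, hausdorffEDist_comm]

end Lipschitz

namespace TopologicalSpace.NonemptyCompacts

variable {ι X : Type*} [Finite ι] [Nonempty ι]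

def hutchinson [TopologicalSpace X] (f : ι → X → X) (hf : ∀ i, Continuous (f i))
    (A : NonemptyCompacts X) : NonemptyCompacts X where
  carrier := ⋃ i, f i '' A
  isCompact' := isCompact_iUnion fun i => A.isCompact.image (hf i)
  nonempty' := nonempty_iUnion.2 ⟨Classical.arbitrary ι, A.nonempty.image _⟩

theorem isFixedPt_hutchinson_iff [TopologicalSpace X] {f : ι → X → X}
    {hf : ∀ i, Continuous (f i)} {A : NonemptyCompacts X} :
    IsFixedPt (hutchinson f hf) A ↔ (A : Set X) = ⋃ i, f i '' A := by
  rw [IsFixedPt, NonemptyCompacts.ext_iff, eq_comm]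
  rfl

theorem lipschitzWith_hutchinson [EMetricSpace X] {f : ι → X → X} {K : ℝ≥0}
    (hf : ∀ i, LipschitzWith K (f i)) :
    LipschitzWith K (hutchinson f fun i => (hf i).continuous) := fun A B =>
  calc hausdorffEDist (⋃ i, f i '' A) (⋃ i, f i '' B)
      ≤ ⨆ i, hausdorffEDist (f i '' A) (f i '' B) := hausdorffEDist_iUnion_le
    _ ≤ K * hausdorffEDist (A : Set X) B :=
        iSup_le fun i => (hf i).hausdorffEDist_image_le A.nonempty B.nonempty

end TopologicalSpace.NonemptyCompacts

open TopologicalSpace.NonemptyCompacts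

/-- Hutchinson–Barnsley: an IFS of contractions on a complete metric space has a
unique nonempty compact attractor. -/
theorem ifs_attractor (X : Type*) [MetricSpace X] [CompleteSpace X] [Nonempty X]
    (n : ℕ) (hn : 0 < n) (f : Fin n → X → X)
    (hf : ∀ i, ∃ c : ℝ≥0, c < 1 ∧ LipschitzWith c (f i)) :
    ∃! A : Set X, A.Nonempty ∧ IsCompact A ∧ A = ⋃ i, f i '' A := by
  have : Nonempty (Fin n) := ⟨⟨0, hn⟩⟩
  choose c hc hlip using hf
  obtain ⟨j, hj⟩ := Finite.exists_max c
  have hF : ContractingWith (c j) (hutchinson f fun i => (hlip i).continuous) :=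
    ⟨hc j, lipschitzWith_hutchinson fun i => (hlip i).weaken (hj i)⟩
  refine ⟨hF.fixedPoint, ⟨hF.fixedPoint.nonempty, hF.fixedPoint.isCompact,
    isFixedPt_hutchinson_iff.1 hF.fixedPoint_isFixedPt⟩, ?_⟩
  rintro B ⟨hB, hBc, hBfix⟩
  exact congrArg SetLike.coe
    (hF.fixedPoint_unique (x := ⟨⟨B, hBc⟩, hB⟩) (isFixedPt_hutchinson_iff.2 hBfix))
end

section
/- Let X be a complete metric space, m ∈ ℕ, and g_1,...,g_n : X^m → X contractions, where X^m carries the maximum metric. Then there exists a unique nonempty compact set A ⊆ X such that A = ⋃_{i=1}^n g_i(A × ... × A) (m-fold product). -/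
/-!
The Hutchinson operator `A ↦ ⋃ i, g i '' (A × ⋯ × A)` maps nonempty compact sets to nonempty
compact sets. If every `g i` is `K`-Lipschitz for the max metric, it is a `K`-contraction for
the Hausdorff metric: a point `g i p` of the image of `A` is within `K * d_H(A, B)` of the point
`g i q` of the image of `B`, where each `q j` is a point of `B` nearest to `p j`. The nonempty
compact subsets of a complete space form a complete space, so Banach's fixed point theorem gives
the unique attractor.
-/

open scoped NNReal ENNReal
open Set Metric TopologicalSpace Function

section HutchinsonOperator

variable {X ι κ : Type*}

def hutchinsonOperator (g : ι → (κ → X) → X) (A : Set X) : Set X :=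
  ⋃ i, g i '' {p : κ → X | ∀ j, p j ∈ A}

variable {g : ι → (κ → X) → X} {A B : Set X}

theorem Set.Nonempty.hutchinsonOperator [Nonempty ι] (hA : A.Nonempty) :
    (hutchinsonOperator g A).Nonempty := by
  obtain ⟨x, hx⟩ := hA
  exact ⟨_, mem_iUnion.2 ⟨Classical.arbitrary ι, mem_image_of_mem _ fun (_ : κ) => hx⟩⟩

theorem IsCompact.hutchinsonOperator [TopologicalSpace X] [Finite ι]
    (hg : ∀ i, Continuous (g i)) (hA : IsCompact A) : IsCompact (hutchinsonOperator g A) := by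
  have hpow : IsCompact {p : κ → X | ∀ j, p j ∈ A} := by
    simpa only [Set.pi, mem_univ, true_imp_iff] using isCompact_univ_pi fun (_ : κ) => hA
  exact isCompact_iUnion fun i => hpow.image (hg i)

section Lipschitz

variable [PseudoEMetricSpace X] [Fintype κ] {K : ℝ≥0}

theorem exists_edist_hutchinsonOperator_le (hg : ∀ i, LipschitzWith K (g i))
    (hB : IsCompact B) (hB₀ : B.Nonempty) {x : X} (hx : x ∈ hutchinsonOperator g A) :
    ∃ y ∈ hutchinsonOperator g B, edist x y ≤ K * hausdorffEDist A B := by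
  obtain ⟨i, p, hpA, rfl⟩ := mem_iUnion.1 hx
  choose q hqB hpq using fun j => hB.exists_infEDist_eq_edist hB₀ (p j)
  have hdist : edist p q ≤ hausdorffEDist A B :=
    edist_pi_le_iff.2 fun j => hpq j ▸ infEDist_le_hausdorffEDist_of_mem (hpA j)
  exact ⟨g i q, mem_iUnion.2 ⟨i, mem_image_of_mem _ hqB⟩,
    (hg i p q).trans (by gcongr)⟩

theorem hausdorffEDist_hutchinsonOperator_le (hg : ∀ i, LipschitzWith K (g i))
    (hA : IsCompact A) (hA₀ : A.Nonempty) (hB : IsCompact B) (hB₀ : B.Nonempty) :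
    hausdorffEDist (hutchinsonOperator g A) (hutchinsonOperator g B) ≤
      K * hausdorffEDist A B := by
  refine hausdorffEDist_le_of_mem_edist
    (fun x hx => exists_edist_hutchinsonOperator_le hg hB hB₀ hx) fun x hx => ?_
  obtain ⟨y, hy, hxy⟩ := exists_edist_hutchinsonOperator_le hg hA hA₀ hx
  exact ⟨y, hy, by rwa [hausdorffEDist_comm]⟩

end Lipschitz

theorem exists_lt_one_forall_lipschitzWith [PseudoEMetricSpace X] [Fintype κ] [Finite ι]
    (hg : ∀ i, ∃ c : ℝ≥0, c < 1 ∧ LipschitzWith c (g i)) :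
    ∃ K : ℝ≥0, K < 1 ∧ ∀ i, LipschitzWith K (g i) := by
  have := Fintype.ofFinite ι
  choose c hc1 hc using hg
  exact ⟨Finset.univ.sup c, Finset.sup_lt_iff zero_lt_one |>.2 fun i _ => hc1 i,
    fun i => (hc i).weaken (Finset.le_sup (Finset.mem_univ i))⟩

namespace NonemptyCompacts

variable [Finite ι] [Nonempty ι]

def hutchinsonOperator [TopologicalSpace X] (g : ι → (κ → X) → X)
    (hg : ∀ i, Continuous (g i)) :
    NonemptyCompacts X → NonemptyCompacts X :=
  fun A => ⟨⟨_root_.hutchinsonOperator g A, A.isCompact.hutchinsonOperator hg⟩,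
    A.nonempty.hutchinsonOperator⟩

theorem contractingWith_hutchinsonOperator [EMetricSpace X] [Fintype κ] {K : ℝ≥0}
    (hK : K < 1) (hg : ∀ i, LipschitzWith K (g i)) :
    ContractingWith K (hutchinsonOperator g fun i => (hg i).continuous) :=
  ⟨hK, fun A B => hausdorffEDist_hutchinsonOperator_le hg
    A.isCompact A.nonempty B.isCompact B.nonempty⟩

end NonemptyCompacts

theorem existsUnique_eq_hutchinsonOperator [MetricSpace X] [CompleteSpace X] [Nonempty X]
    [Finite ι] [Nonempty ι] [Fintype κ] {K : ℝ≥0} (hK : K < 1)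
    (hg : ∀ i, LipschitzWith K (g i)) :
    ∃! A : Set X, A.Nonempty ∧ IsCompact A ∧ A = hutchinsonOperator g A := by
  set F := NonemptyCompacts.hutchinsonOperator g fun i => (hg i).continuous
  have hF : ContractingWith K F := NonemptyCompacts.contractingWith_hutchinsonOperator hK hg
  obtain ⟨A₀, hA₀⟩ : ∃ A₀, IsFixedPt F A₀ := ⟨_, hF.fixedPoint_isFixedPt⟩
  refine ⟨A₀, ⟨A₀.nonempty, A₀.isCompact, congrArg SetLike.coe hA₀.symm⟩, ?_⟩
  rintro A ⟨hA_ne, hA, hA_fix⟩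
  have hA_fix' : IsFixedPt F ⟨⟨A, hA⟩, hA_ne⟩ := NonemptyCompacts.ext hA_fix.symm
  exact congrArg SetLike.coe (hF.fixedPoint_unique' hA_fix' hA₀)

end HutchinsonOperator

theorem gifs_attractor_general (X : Type*) [MetricSpace X] [CompleteSpace X] [Nonempty X]
    (m n : ℕ) (hn : 0 < n) (g : Fin n → (Fin m → X) → X)
    (hg : ∀ i, ∃ c : ℝ≥0, c < 1 ∧ LipschitzWith c (g i)) :
    ∃! A : Set X, A.Nonempty ∧ IsCompact A ∧
      A = ⋃ i, g i '' {p : Fin m → X | ∀ j, p j ∈ A} := by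
  have : Nonempty (Fin n) := ⟨⟨0, hn⟩⟩
  obtain ⟨K, hK, hgK⟩ := exists_lt_one_forall_lipschitzWith hg
  exact existsUnique_eq_hutchinsonOperator hK hgK

/-- GIFS of order `m`: contractions `g_i : X^m → X` (max metric) on a complete metric
space admit a unique nonempty compact attractor `A = ⋃ g_i (A × ... × A)`. -/
theorem gifs_attractor (X : Type*) [MetricSpace X] [CompleteSpace X] [Nonempty X]
    (m n : ℕ) (hm : 0 < m) (hn : 0 < n) (g : Fin n → (Fin m → X) → X)
    (hg : ∀ i, ∃ c : ℝ≥0, c < 1 ∧ LipschitzWith c (g i)) :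
    ∃! A : Set X, A.Nonempty ∧ IsCompact A ∧
      A = ⋃ i, g i '' {p : Fin m → X | ∀ j, p j ∈ A} :=
  gifs_attractor_general X m n hn g hg
end

section
/- Let X be a complete metric space and f_1,...,f_n : ℓ_∞(X) → X contractions (with respect to the supremum metric) each satisfying condition (C1). Then there exists a unique nonempty compact set A ⊆ X such that A = ⋃_{i=1}^n closure(f_i(A × A × ...)). -/
open scoped NNReal

/-- Condition (C1): for every bounded sequence of nonempty compact sets `K_k`,
the closure of the image of the product `∏ K_k` under `f` is compact. -/
def SatisfiesC1 {X : Type*} [MetricSpace X]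
    (f : BoundedContinuousFunction ℕ X → X) : Prop :=
  ∀ K : ℕ → Set X, (∀ k, (K k).Nonempty ∧ IsCompact (K k)) →
    Bornology.IsBounded (⋃ k, K k) →
    IsCompact (closure (f '' {x | ∀ k, x k ∈ K k}))

/-!
The map `A ↦ ⋃ i, closure (f i (A × A × ⋯))` sends nonempty compact sets to nonempty compact
sets by (C1), and it is a contraction for the Hausdorff distance: a sequence in `A` can be
matched term by term with a sequence in `B` at sup-distance at most `d_H(A, B)`, and each `f i`
shrinks that distance by its Lipschitz constant. The Banach fixed point theorem in the complete
space of nonempty compact subsets of `X` then gives the attractor.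
-/

open Metric Set TopologicalSpace Function
open scoped BoundedContinuousFunction

section

variable {X : Type*} [MetricSpace X]

/-- The product `A × A × ⋯` as a subset of `ℓ_∞(X)`. -/
def boundedSeqsIn (A : Set X) : Set (ℕ →ᵇ X) := {x | ∀ k, x k ∈ A}

theorem Set.Nonempty.boundedSeqsIn {A : Set X} (hA : A.Nonempty) : (boundedSeqsIn A).Nonempty :=
  let ⟨a, ha⟩ := hA
  ⟨BoundedContinuousFunction.const ℕ a, fun _ => ha⟩

theorem exists_mem_boundedSeqsIn_edist_le {A B : Set X} (hB : IsCompact B) (hBne : B.Nonempty)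
    {σ : ℕ →ᵇ X} (hσ : σ ∈ boundedSeqsIn A) :
    ∃ τ ∈ boundedSeqsIn B, edist σ τ ≤ hausdorffEDist A B := by
  choose τ hτB hτ using fun k => hB.exists_infEDist_eq_edist hBne (σ k)
  obtain ⟨C, hC⟩ := isBounded_iff.1 hB.isBounded
  refine ⟨.mkOfDiscrete τ C fun j k => hC (hτB j) (hτB k), hτB, ?_⟩
  rw [BoundedContinuousFunction.edist_eq_iSup]
  exact iSup_le fun k => (hτ k).symm.trans_le (infEDist_le_hausdorffEDist_of_mem (hσ k))

theorem LipschitzWith.hausdorffEDist_image_boundedSeqsIn_le {g : (ℕ →ᵇ X) → X} {c : ℝ≥0}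
    (hg : LipschitzWith c g) {A B : Set X} (hA : IsCompact A) (hAne : A.Nonempty)
    (hB : IsCompact B) (hBne : B.Nonempty) :
    hausdorffEDist (g '' boundedSeqsIn A) (g '' boundedSeqsIn B) ≤ c * hausdorffEDist A B := by
  refine hausdorffEDist_le_of_mem_edist ?_ ?_
  · rintro _ ⟨σ, hσ, rfl⟩
    obtain ⟨τ, hτ, hστ⟩ := exists_mem_boundedSeqsIn_edist_le hB hBne hσ
    exact ⟨g τ, mem_image_of_mem g hτ, (hg σ τ).trans (by gcongr)⟩
  · rintro _ ⟨σ, hσ, rfl⟩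
    obtain ⟨τ, hτ, hστ⟩ := exists_mem_boundedSeqsIn_edist_le hA hAne hσ
    refine ⟨g τ, mem_image_of_mem g hτ, (hg σ τ).trans ?_⟩
    rw [hausdorffEDist_comm]
    gcongr

variable {ι : Type*} {f : ι → (ℕ →ᵇ X) → X}

def gifsOperator (f : ι → (ℕ →ᵇ X) → X) (A : Set X) : Set X :=
  ⋃ i, closure (f i '' boundedSeqsIn A)

theorem IsCompact.gifsOperator [Finite ι] (hC1 : ∀ i, SatisfiesC1 (f i)) {A : Set X}
    (hA : IsCompact A) (hAne : A.Nonempty) : IsCompact (gifsOperator f A) :=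
  isCompact_iUnion fun i => hC1 i (fun _ => A) (fun _ => ⟨hAne, hA⟩)
    (by rw [iUnion_const]; exact hA.isBounded)

theorem Set.Nonempty.gifsOperator [Nonempty ι] {A : Set X} (hA : A.Nonempty) :
    (gifsOperator f A).Nonempty :=
  let ⟨x, hx⟩ := hA.boundedSeqsIn
  ⟨f (Classical.arbitrary ι) x, mem_iUnion.2 ⟨_, subset_closure ⟨x, hx, rfl⟩⟩⟩

theorem hausdorffEDist_gifsOperator_le {c : ℝ≥0} (hf : ∀ i, LipschitzWith c (f i))
    {A B : Set X} (hA : IsCompact A) (hAne : A.Nonempty) (hB : IsCompact B) (hBne : B.Nonempty) :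
    hausdorffEDist (gifsOperator f A) (gifsOperator f B) ≤ c * hausdorffEDist A B := by
  refine hausdorffEDist_iUnion_le.trans (iSup_le fun i => ?_)
  rw [hausdorffEDist_closure]
  exact (hf i).hausdorffEDist_image_boundedSeqsIn_le hA hAne hB hBne

def gifsMap [Finite ι] [Nonempty ι] (hC1 : ∀ i, SatisfiesC1 (f i)) (A : NonemptyCompacts X) :
    NonemptyCompacts X :=
  ⟨⟨gifsOperator f A, A.isCompact.gifsOperator hC1 A.nonempty⟩, A.nonempty.gifsOperator⟩

theorem contractingWith_gifsMap [Finite ι] [Nonempty ι] {c : ℝ≥0} (hc : c < 1)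
    (hf : ∀ i, LipschitzWith c (f i)) (hC1 : ∀ i, SatisfiesC1 (f i)) :
    ContractingWith c (gifsMap hC1) :=
  ⟨hc, fun A B => hausdorffEDist_gifsOperator_le hf A.isCompact A.nonempty B.isCompact B.nonempty⟩

theorem existsUnique_eq_gifsOperator [CompleteSpace X] [Nonempty X] [Finite ι] [Nonempty ι]
    {c : ℝ≥0} (hc : c < 1) (hf : ∀ i, LipschitzWith c (f i)) (hC1 : ∀ i, SatisfiesC1 (f i)) :
    ∃! A : Set X, A.Nonempty ∧ IsCompact A ∧ A = gifsOperator f A := by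
  have hF := contractingWith_gifsMap hc hf hC1
  have hA := hF.fixedPoint_isFixedPt
  refine ⟨_, ⟨NonemptyCompacts.nonempty _, NonemptyCompacts.isCompact _,
    congrArg SetLike.coe hA.symm⟩, ?_⟩
  rintro B ⟨hBne, hBc, hB⟩
  have hBfix : IsFixedPt (gifsMap hC1) ⟨⟨B, hBc⟩, hBne⟩ := NonemptyCompacts.ext hB.symm
  exact congrArg SetLike.coe (hF.fixedPoint_unique' hBfix hA)

end

/-- Secelean's theorem: a GIFS of order infinity (contractions `ℓ_∞(X) → X`
satisfying (C1)) on a complete metric space has a unique nonempty compact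
attractor `A = ⋃ closure (f_i (A × A × ...))`. -/
theorem gifs_infty_attractor (X : Type*) [MetricSpace X] [CompleteSpace X] [Nonempty X]
    (n : ℕ) (hn : 0 < n) (f : Fin n → BoundedContinuousFunction ℕ X → X)
    (hlip : ∀ i, ∃ c : ℝ≥0, c < 1 ∧ LipschitzWith c (f i))
    (hC1 : ∀ i, SatisfiesC1 (f i)) :
    ∃! A : Set X, A.Nonempty ∧ IsCompact A ∧
      A = ⋃ i, closure (f i '' {x | ∀ k, x k ∈ A}) := by
  have : Nonempty (Fin n) := ⟨⟨0, hn⟩⟩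
  choose c hc1 hc using hlip
  have hL : Finset.univ.sup c < 1 := (Finset.sup_lt_iff zero_lt_one).2 fun i _ => hc1 i
  have hfL i : LipschitzWith (Finset.univ.sup c) (f i) :=
    (hc i).weaken (Finset.le_sup (Finset.mem_univ i))
  exact existsUnique_eq_gifsOperator hL hfL hC1
end

section
/- Let X be a metric space and h a gauge function. Suppose K ⊆ X is a nonempty compact set with 0 < H^h(K), where H^h is the h-Hausdorff measure, and suppose that for every weak contraction f : K → X one has H^h(K ∩ f(K)) = 0. Then K is not the attractor of any weak IFS, i.e., there is no finite family f_1,...,f_n of weak contractions f_i : X → X with K = ⋃_{i=1}^n f_i(K). -/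
open MeasureTheory

theorem not_attractor_of_weak_IFS_general (X : Type*) [MetricSpace X]
    (K : Set X)
    (μ : OuterMeasure X)
    (hpos : 0 < μ K)
    (hsmall : ∀ f : X → X, (∀ x ∈ K, ∀ y ∈ K, x ≠ y → dist (f x) (f y) < dist x y) →
      μ (K ∩ f '' K) = 0) :
    ¬ ∃ (n : ℕ) (f : Fin n → X → X),
        (∀ i, ∀ x y : X, x ≠ y → dist (f i x) (f i y) < dist x y) ∧
        K = ⋃ i, f i '' K := by
  rintro ⟨n, f, hcontr, hK⟩
  have hcover : K ⊆ ⋃ i, K ∩ f i '' K := by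
    rw [← Set.inter_iUnion, ← hK, Set.inter_self]
  have hnull : μ K = 0 :=
    measure_mono_null hcover <| measure_iUnion_null fun i =>
      hsmall (f i) fun x _ y _ => hcontr i x y
  exact hpos.ne' hnull

/-- If `K` is nonempty compact with positive `h`-Hausdorff measure (for a gauge
function `h`), and every weak contraction `f` on `K` satisfies
`H^h(K ∩ f(K)) = 0`, then `K` is not the attractor of any weak IFS. -/
theorem not_attractor_of_weak_IFS (X : Type*) [MetricSpace X] (h : ℝ → ℝ)
    (hmono : MonotoneOn h (Set.Ici 0))
    (hrc : ∀ x ≥ (0 : ℝ), ContinuousWithinAt h (Set.Ici x) x)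
    (h0 : ∀ x ≥ (0 : ℝ), (h x = 0 ↔ x = 0))
    (K : Set X) (hK : IsCompact K) (hKne : K.Nonempty)
    (μ : OuterMeasure X)
    (hμ : μ = MeasureTheory.OuterMeasure.mkMetric fun d => ENNReal.ofReal (h d.toReal))
    (hpos : 0 < μ K)
    (hsmall : ∀ f : X → X, (∀ x ∈ K, ∀ y ∈ K, x ≠ y → dist (f x) (f y) < dist x y) →
      μ (K ∩ f '' K) = 0) :
    ¬ ∃ (n : ℕ) (f : Fin n → X → X),
        (∀ i, ∀ x y : X, x ≠ y → dist (f i x) (f i y) < dist x y) ∧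
        K = ⋃ i, f i '' K :=
  not_attractor_of_weak_IFS_general X K μ hpos hsmall
end

section
/- Let X be a Polish metric space, q ≥ 2, K ⊆ X a q-balanced set, and P ⊆ X a finite nonempty set disjoint from K. Then R := K ∪ P is a generalized fractal: there exist contractions g_1,...,g_m : ℓ_∞(R) → R with R = ⋃_{j=1}^m g_j(R × R × ...), and for each r ∈ (0,1) these can be chosen with Lipschitz constants ≤ r. -/
/-- Distance between two subsets of a metric space:
`dist(A,B) = inf { d(a,b) : a ∈ A, b ∈ B }`. -/
noncomputable def SetDist {X : Type*} [MetricSpace X] (A B : Set X) : ℝ :=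
  sInf (Set.image2 dist A B)

/-- `IsQBalancedSystem q K a b C Φ` says that the compact set `K` is `q`-balanced,
witnessed by the sequence `(a_n)` of branching numbers, the sequence `(b_n)` of
diameter bounds, the nested closed sets `C n σ` (indexed by tuples
`σ : Fin (n+1) → ℕ` with `σ i < a i`, i.e. tuples `(i_1, ..., i_{n+1})` with
`i_j ∈ {1, ..., a_j}` written with 0-based digits), and the indexing function `Φ`
(defined on odd naturals, surjective onto valid tuples, with `Φ n` of length `≤ n`).
The conditions are (i)–(v) of Balka–Máthé (with the factor `q` in (iv)). -/
def IsQBalancedSystem {X : Type*} [MetricSpace X] (q : ℝ) (K : Set X)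
    (a : ℕ → ℕ) (b : ℕ → ℝ)
    (C : (n : ℕ) → (Fin (n + 1) → ℕ) → Set X)
    (Φ : ℕ → Σ n : ℕ, Fin (n + 1) → ℕ) : Prop :=
  IsCompact K ∧
  -- the representation of K as the intersection of the level sets
  K = (⋂ n : ℕ, ⋃ σ ∈ {σ : Fin (n + 1) → ℕ | ∀ i, σ i < a (i : ℕ)}, C n σ) ∧
  -- (i) growth of the branching numbers
  2 ≤ a 0 ∧ (∀ n, 1 ≤ n → n * ∏ i ∈ Finset.range n, a i ≤ a n) ∧
  -- (ii) nestedness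
  (∀ n (σ : Fin (n + 2) → ℕ), (∀ i, σ i < a (i : ℕ)) →
      C (n + 1) σ ⊆ C n fun i => σ i.castSucc) ∧
  -- the level sets are nonempty and closed, and (iii) diameter bounds
  (∀ n (σ : Fin (n + 1) → ℕ), (∀ i, σ i < a (i : ℕ)) →
      (C n σ).Nonempty ∧ IsClosed (C n σ) ∧ Metric.diam (C n σ) ≤ b n) ∧
  (∀ n, 0 ≤ b n) ∧
  -- (iv) separation of distinct level sets, with factor q
  (∀ n (σ τ : Fin (n + 1) → ℕ), (∀ i, σ i < a (i : ℕ)) → (∀ i, τ i < a (i : ℕ)) →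
      σ ≠ τ → q * b n < SetDist (C n σ) (C n τ)) ∧
  -- Φ is an indexing function according to (a_n)
  (∀ n, n % 2 = 1 → (Φ n).1 + 1 ≤ n ∧ ∀ i, (Φ n).2 i < a (i : ℕ)) ∧
  (∀ m (τ : Fin (m + 1) → ℕ), (∀ i, τ i < a (i : ℕ)) →
      ∃ n, n % 2 = 1 ∧ Φ n = ⟨m, τ⟩) ∧
  -- (v) the technical separation condition
  (∀ m, (m + 1) % 2 = 1 → ∀ σ τ : Fin (m + 1) → ℕ,
      (∀ i, σ i < a (i : ℕ)) → (∀ i, τ i < a (i : ℕ)) →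
      C m σ ⊆ C (Φ (m + 1)).1 (Φ (m + 1)).2 →
      ¬ C m τ ⊆ C (Φ (m + 1)).1 (Φ (m + 1)).2 →
      ∀ s t : ℕ, s < a (m + 1) → t < a (m + 1) → s ≠ t →
        Metric.diam (⋃ u ∈ Finset.range (a (m + 1)), C (m + 1) (Fin.snoc τ u)) <
          SetDist (C (m + 1) (Fin.snoc σ s)) (C (m + 1) (Fin.snoc σ t)))

/-!
A compact set `R` with an isolated point `p` is a generalized fractal, for a cardinality reason.
Let `ρ > 0` be the distance from `p` to `R \ {p}`. Cover `R` by finitely many pieces of diameter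
`≤ r ρ`; a separable metric space has at most continuum many points, so each piece is the image of
a map `f : Set ℕ → X`. The map `x ↦ f {k | x k = p}` is then `r`-Lipschitz on `ℓ_∞(R)`, because two
sequences with different `p`-patterns have coordinates at distance `≥ ρ`, and it is onto the piece,
because sequences with values in `{p, y}` (`y ≠ p`) realise every pattern.
-/

open Set Function TopologicalSpace

theorem exists_injective_setNat (Y : Type*) [TopologicalSpace Y] [SecondCountableTopology Y]
    [T0Space Y] : ∃ e : Y → Set ℕ, Injective e := by
  obtain ⟨b, hbc, -, hb⟩ := exists_countable_basis Y
  have : Countable b := hbc.to_subtype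
  obtain ⟨n, hn⟩ := exists_injective_nat b
  refine ⟨fun x => n '' {s : b | x ∈ (s : Set Y)}, fun x y hxy => ?_⟩
  have hmem : {s : b | x ∈ (s : Set Y)} = {s : b | y ∈ (s : Set Y)} :=
    Set.image_injective.mpr hn hxy
  exact (hb.inseparable_iff.mpr fun s hs => Set.ext_iff.mp hmem ⟨s, hs⟩).eq

theorem TopologicalSpace.IsSeparable.exists_range_setNat_eq {X : Type*} [MetricSpace X]
    {T : Set X} (hT : IsSeparable T) (hne : T.Nonempty) :
    ∃ f : Set ℕ → X, range f = T := by
  have : SeparableSpace T := hT.separableSpace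
  obtain ⟨e, he⟩ := exists_injective_setNat T
  obtain ⟨t₀, ht₀⟩ := hne
  refine ⟨extend e Subtype.val fun _ => t₀, ((range_extend_subset _ _ _).trans ?_).antisymm ?_⟩
  · rintro _ (⟨t, rfl⟩ | ⟨_, -, rfl⟩)
    exacts [t.2, ht₀]
  · intro t ht
    exact ⟨e ⟨t, ht⟩, he.extend_apply _ _ _⟩

section

variable {X : Type*} [MetricSpace X]

theorem IsCompact.exists_finite_cover_range_setNat {R : Set X} (hR : IsCompact R) {δ : ℝ}
    (hδ : 0 < δ) : ∃ (m : ℕ) (f : Fin m → Set ℕ → X),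
      (∀ j A B, dist (f j A) (f j B) ≤ δ) ∧ R = ⋃ j, range (f j) := by
  obtain ⟨t, htR, htfin, hcover⟩ := hR.finite_cover_balls (half_pos hδ)
  obtain ⟨m, c, -, rfl⟩ := htfin.fin_param
  have hpiece (j : Fin m) : ∃ f : Set ℕ → X, range f = R ∩ Metric.ball (c j) (δ / 2) :=
    (hR.isSeparable.mono inter_subset_left).exists_range_setNat_eq
      ⟨c j, htR (mem_range_self j), Metric.mem_ball_self (half_pos hδ)⟩
  choose f hf using hpiece
  refine ⟨m, f, fun j A B => ?_, ?_⟩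
  · have hA : dist (f j A) (c j) < δ / 2 := ((hf j).subset (mem_range_self A)).2
    have hB : dist (f j B) (c j) < δ / 2 := ((hf j).subset (mem_range_self B)).2
    linarith [dist_triangle_right (f j A) (f j B) (c j)]
  · simp_rw [hf, ← inter_iUnion]
    exact (inter_eq_left.mpr (hcover.trans (biUnion_range.subset))).symm

/-- `g` witnesses that `R` is a generalized fractal: the `g j` restrict to `r`-Lipschitz maps
`ℓ_∞(R) → R` whose images cover `R`. -/
def IsGIFSWith (R : Set X) (r : ℝ) {m : ℕ} (g : Fin m → (ℕ → X) → X) : Prop :=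
  (∀ j (x : ℕ → X), (∀ k, x k ∈ R) → g j x ∈ R) ∧
  (∀ j (x y : ℕ → X), (∀ k, x k ∈ R) → (∀ k, y k ∈ R) →
    dist (g j x) (g j y) ≤ r * ⨆ k, dist (x k) (y k)) ∧
  R = ⋃ j, g j '' {x : ℕ → X | ∀ k, x k ∈ R}

theorem isGIFSWith_singleton (p : X) {r : ℝ} (hr : 0 ≤ r) :
    IsGIFSWith {p} r fun (_ : Fin 1) _ => p := by
  refine ⟨fun _ _ _ => rfl, fun _ x y _ _ => ?_, ?_⟩
  · rw [dist_self]
    exact mul_nonneg hr (Real.iSup_nonneg fun _ => dist_nonneg)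
  · ext w
    simp only [mem_singleton_iff, mem_iUnion, mem_image]
    exact ⟨fun hw => ⟨0, fun _ => p, fun _ => rfl, hw.symm⟩, fun ⟨_, _, _, hw⟩ => hw.symm⟩

theorem le_iSup_dist_of_setOf_eq_ne {R : Set X} (hR : Bornology.IsBounded R) {p : X} {ρ : ℝ}
    (hsep : ∀ w ∈ R, w ≠ p → ρ ≤ dist p w) {x y : ℕ → X} (hx : ∀ k, x k ∈ R)
    (hy : ∀ k, y k ∈ R) (hxy : {k | x k = p} ≠ {k | y k = p}) :
    ρ ≤ ⨆ k, dist (x k) (y k) := by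
  obtain ⟨k, hk⟩ : ∃ k, ¬(x k = p ↔ y k = p) := by
    by_contra! h
    exact hxy (Set.ext h)
  have hρk : ρ ≤ dist (x k) (y k) := by
    by_cases hxk : x k = p
    · rw [hxk]
      exact hsep _ (hy k) fun hyk => hk (iff_of_true hxk hyk)
    · have hyk : y k = p := by tauto
      rw [hyk, dist_comm]
      exact hsep _ (hx k) hxk
  obtain ⟨D, hD⟩ := Metric.isBounded_iff.mp hR
  exact hρk.trans (le_ciSup ⟨D, by rintro _ ⟨i, rfl⟩; exact hD (hx i) (hy i)⟩ k)

theorem isGIFSWith_comp_setOf_eq {R : Set X} (hR : Bornology.IsBounded R) {p y : X} (hp : p ∈ R)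
    (hy : y ∈ R) (hyp : y ≠ p) {ρ r : ℝ} (hr : 0 ≤ r) (hsep : ∀ w ∈ R, w ≠ p → ρ ≤ dist p w)
    {m : ℕ} (f : Fin m → Set ℕ → X) (hf : ∀ j A B, dist (f j A) (f j B) ≤ r * ρ)
    (hcover : R = ⋃ j, range (f j)) :
    IsGIFSWith R r fun j x => f j {k | x k = p} := by
  have hmaps (j : Fin m) (A : Set ℕ) : f j A ∈ R := hcover ▸ mem_iUnion_of_mem j (mem_range_self A)
  refine ⟨fun j x _ => hmaps j _, fun j x x' hx hx' => ?_, ?_⟩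
  · dsimp only
    by_cases hxx' : {k | x k = p} = {k | x' k = p}
    · rw [hxx', dist_self]
      exact mul_nonneg hr (Real.iSup_nonneg fun _ => dist_nonneg)
    · exact (hf j _ _).trans <| mul_le_mul_of_nonneg_left
        (le_iSup_dist_of_setOf_eq_ne hR hsep hx hx' hxx') hr
  · refine (iUnion_subset fun j => image_subset_iff.mpr fun x _ => hmaps j _).antisymm' ?_
    intro w hw
    obtain ⟨j, A, rfl⟩ := mem_iUnion.mp (hcover ▸ hw)
    classical
    refine mem_iUnion_of_mem j ⟨fun k => if k ∈ A then p else y, fun k => ?_, ?_⟩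
    · dsimp only
      split_ifs
      exacts [hp, hy]
    · dsimp only
      congr 1
      ext k
      by_cases hk : k ∈ A <;> simp [hk, hyp]

theorem IsCompact.exists_isGIFSWith_of_isClosed_sdiff_singleton {R : Set X} (hR : IsCompact R)
    {p : X} (hp : p ∈ R) (hiso : IsClosed (R \ {p})) {r : ℝ} (hr : 0 < r) :
    ∃ (m : ℕ) (g : Fin m → (ℕ → X) → X), IsGIFSWith R r g := by
  rcases (R \ {p}).eq_empty_or_nonempty with hRp | ⟨y, hyR, hyp⟩
  · obtain rfl : R = {p} := (sdiff_eq_empty.mp hRp).antisymm (singleton_subset_iff.mpr hp)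
    exact ⟨1, _, isGIFSWith_singleton p hr.le⟩
  obtain ⟨ρ, hρ, hball⟩ := Metric.isOpen_iff.mp hiso.isOpen_compl p (by simp)
  have hsep : ∀ w ∈ R, w ≠ p → ρ ≤ dist p w := fun w hw hwp =>
    not_lt.mp fun h => hball (Metric.mem_ball'.mpr h) ⟨hw, hwp⟩
  obtain ⟨m, f, hf, hcover⟩ := hR.exists_finite_cover_range_setNat (mul_pos hr hρ)
  exact ⟨m, _, isGIFSWith_comp_setOf_eq hR.isBounded hp hyR hyp hr.le hsep f hf hcover⟩

end

theorem union_qbalanced_finite_generalized_fractal_general (X : Type*) [MetricSpace X]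
    (q : ℝ) (K : Set X)
    (hbal : ∃ a b C Φ, IsQBalancedSystem q K a b C Φ)
    (P : Set X) (hPfin : P.Finite) (hPne : P.Nonempty) (hdisj : Disjoint K P) :
    ∀ r ∈ Set.Ioo (0 : ℝ) 1, ∃ (m : ℕ) (g : Fin m → (ℕ → X) → X),
      (∀ j (x : ℕ → X), (∀ k, x k ∈ K ∪ P) → g j x ∈ K ∪ P) ∧
      (∀ j (x y : ℕ → X), (∀ k, x k ∈ K ∪ P) → (∀ k, y k ∈ K ∪ P) →
        dist (g j x) (g j y) ≤ r * ⨆ k, dist (x k) (y k)) ∧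
      K ∪ P = ⋃ j, g j '' {x : ℕ → X | ∀ k, x k ∈ K ∪ P} := by
  intro r hr
  obtain ⟨a, b, C, Φ, hK, -⟩ := hbal
  obtain ⟨p, hp⟩ := hPne
  have hiso : IsClosed ((K ∪ P) \ {p}) := by
    rw [union_sdiff_distrib, sdiff_singleton_eq_self (disjoint_right.mp hdisj hp)]
    exact hK.isClosed.union hPfin.sdiff.isClosed
  exact (hK.union hPfin.isCompact).exists_isGIFSWith_of_isClosed_sdiff_singleton (Or.inr hp)
    hiso hr.1

/-- In a Polish space, the union `R = K ∪ P` of a `q`-balanced set `K` and a finite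
nonempty set `P` disjoint from `K` is a generalized fractal: for every `r ∈ (0,1)`
there are finitely many maps `g_j : ℓ_∞(R) → R` (R-valued sequences with the
supremum metric), Lipschitz with constant `≤ r`, with `R = ⋃ g_j (R × R × ...)`. -/
theorem union_qbalanced_finite_generalized_fractal (X : Type*) [MetricSpace X]
    [CompleteSpace X] [TopologicalSpace.SeparableSpace X]
    (q : ℝ) (hq : 2 ≤ q) (K : Set X)
    (hbal : ∃ a b C Φ, IsQBalancedSystem q K a b C Φ)
    (P : Set X) (hPfin : P.Finite) (hPne : P.Nonempty) (hdisj : Disjoint K P) :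
    ∀ r ∈ Set.Ioo (0 : ℝ) 1, ∃ (m : ℕ) (g : Fin m → (ℕ → X) → X),
      (∀ j (x : ℕ → X), (∀ k, x k ∈ K ∪ P) → g j x ∈ K ∪ P) ∧
      (∀ j (x y : ℕ → X), (∀ k, x k ∈ K ∪ P) → (∀ k, y k ∈ K ∪ P) →
        dist (g j x) (g j y) ≤ r * ⨆ k, dist (x k) (y k)) ∧
      K ∪ P = ⋃ j, g j '' {x : ℕ → X | ∀ k, x k ∈ K ∪ P} :=
  union_qbalanced_finite_generalized_fractal_general X q K hbal P hPfin hPne hdisj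
end

section
/- Let X be a metric space, K ⊆ X a compact set with dist(K,P) = η > 0 for a finite set P, f : ℓ_∞(K) → K a Lipschitz map with constant L, and x ∈ K a fixed point. Define f̃ : ℓ_∞(K ∪ P) → K ∪ P by f̃(x_1,x_2,...) = f(x_1,x_2,...) if all x_k ∈ K, and f̃(x_1,x_2,...) = f(x,x,...) otherwise. Then Lip(f̃) ≤ L · max{1, diam(K)/η}. -/
/-!
On sequences lying entirely in `K` the extension is `f` itself, and if both sequences leave `K`
it is constant, so only the mixed case needs an argument. There some coordinate of one sequence
lies in `P` while the same coordinate of the other lies in `K`, so the sup-distance of the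
sequences is at least `η` (a genuine supremum, as `K ∪ P` is bounded). The two values are images
under `f` of `K`-valued sequences, hence at most `L · diam K` apart, and
`diam K ≤ (diam K / η) · η`.
-/

open Bornology Metric

theorem setDist_le_dist {X : Type*} [MetricSpace X] {A B : Set X} {a b : X}
    (ha : a ∈ A) (hb : b ∈ B) : SetDist A B ≤ dist a b :=
  csInf_le ⟨0, by rintro _ ⟨u, -, v, -, rfl⟩; exact dist_nonneg⟩ (Set.mem_image2_of_mem ha hb)

theorem le_max_one_div_mul {D η S : ℝ} (hη : 0 < η) (hηS : η ≤ S) :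
    D ≤ max 1 (D / η) * S :=
  calc D = D / η * η := (div_mul_cancel₀ D hη.ne').symm
    _ ≤ max 1 (D / η) * S := by gcongr; exact le_max_right _ _

section SupDist

variable {X : Type*} [MetricSpace X] {s : Set X} {y z : ℕ → X}

theorem dist_le_iSup_dist (hs : IsBounded s) (hy : ∀ k, y k ∈ s) (hz : ∀ k, z k ∈ s) (k : ℕ) :
    dist (y k) (z k) ≤ ⨆ k, dist (y k) (z k) :=
  le_ciSup ⟨diam s, by rintro _ ⟨k, rfl⟩; exact dist_le_diam_of_mem hs (hy k) (hz k)⟩ k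

theorem iSup_dist_le_diam (hs : IsBounded s) (hy : ∀ k, y k ∈ s) (hz : ∀ k, z k ∈ s) :
    ⨆ k, dist (y k) (z k) ≤ diam s :=
  Real.iSup_le (fun k => dist_le_diam_of_mem hs (hy k) (hz k)) diam_nonneg

theorem iSup_dist_comm (y z : ℕ → X) :
    ⨆ k, dist (y k) (z k) = ⨆ k, dist (z k) (y k) := by
  simp_rw [dist_comm]

end SupDist

section Extension

variable {X : Type*} [MetricSpace X] {K P : Set X} {L : ℝ} {f : (ℕ → X) → X}
  (hlip : ∀ y z : ℕ → X, (∀ k, y k ∈ K) → (∀ k, z k ∈ K) →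
    dist (f y) (f z) ≤ L * ⨆ k, dist (y k) (z k))
include hlip

theorem dist_apply_le_mul_diam (hK : IsBounded K) (hL : 0 ≤ L) {y z : ℕ → X}
    (hy : ∀ k, y k ∈ K) (hz : ∀ k, z k ∈ K) : dist (f y) (f z) ≤ L * diam K :=
  (hlip y z hy hz).trans (by gcongr; exact iSup_dist_le_diam hK hy hz)

theorem dist_apply_le_of_not_forall_mem (hK : IsBounded K) (hP : IsBounded P) {η : ℝ}
    (hηpos : 0 < η) (hKP : ∀ a ∈ K, ∀ b ∈ P, η ≤ dist a b) (hL : 0 ≤ L) {w : ℕ → X}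
    (hw : ∀ k, w k ∈ K) ⦃y z : ℕ → X⦄ (hy : ∀ k, y k ∈ K) (hz : ∀ k, z k ∈ K ∪ P)
    (hzK : ¬ ∀ k, z k ∈ K) :
    dist (f y) (f w) ≤ L * max 1 (diam K / η) * ⨆ k, dist (y k) (z k) := by
  obtain ⟨k₀, hk₀⟩ := not_forall.1 hzK
  have hηS : η ≤ ⨆ k, dist (y k) (z k) :=
    (hKP _ (hy k₀) _ ((hz k₀).resolve_left hk₀)).trans
      (dist_le_iSup_dist (hK.union hP) (fun k => Or.inl (hy k)) hz k₀)
  calc dist (f y) (f w) ≤ L * diam K := dist_apply_le_mul_diam hlip hK hL hy hw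
    _ ≤ L * (max 1 (diam K / η) * ⨆ k, dist (y k) (z k)) := by
      gcongr; exact le_max_one_div_mul hηpos hηS
    _ = _ := (mul_assoc _ _ _).symm

end Extension

theorem extension_lipschitz_bound_general (X : Type*) [MetricSpace X]
    (K P : Set X) (hK : IsCompact K)
    (hPfin : P.Finite)
    (η : ℝ) (hη : η = SetDist K P) (hηpos : 0 < η)
    (L : ℝ) (hL : 0 ≤ L) (f : (ℕ → X) → X)
    (hlip : ∀ y z : ℕ → X, (∀ k, y k ∈ K) → (∀ k, z k ∈ K) →
      dist (f y) (f z) ≤ L * ⨆ k, dist (y k) (z k))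
    (x : X) (hx : x ∈ K)
    (g : (ℕ → X) → X)
    (hg : ∀ y : ℕ → X, (∀ k, y k ∈ K) → g y = f y)
    (hg' : ∀ y : ℕ → X, ¬ (∀ k, y k ∈ K) → g y = f fun _ => x) :
    ∀ y z : ℕ → X, (∀ k, y k ∈ K ∪ P) → (∀ k, z k ∈ K ∪ P) →
      dist (g y) (g z) ≤ L * max 1 (Metric.diam K / η) * ⨆ k, dist (y k) (z k) := by
  intro y z hy hz
  have hKP : ∀ a ∈ K, ∀ b ∈ P, η ≤ dist a b := fun a ha b hb => hη ▸ setDist_le_dist ha hb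
  have mixed := dist_apply_le_of_not_forall_mem hlip hK.isBounded hPfin.isBounded hηpos hKP hL
    fun _ => hx
  have hS : 0 ≤ ⨆ k, dist (y k) (z k) := Real.iSup_nonneg fun _ => dist_nonneg
  by_cases hyK : ∀ k, y k ∈ K <;> by_cases hzK : ∀ k, z k ∈ K
  · rw [hg y hyK, hg z hzK]
    refine (hlip y z hyK hzK).trans ?_
    gcongr
    exact le_mul_of_one_le_right hL (le_max_left _ _)
  · rw [hg y hyK, hg' z hzK]
    exact mixed hyK hz hzK
  · rw [hg' y hyK, hg z hzK, dist_comm, iSup_dist_comm]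
    exact mixed hzK hy hyK
  · rw [hg' y hyK, hg' z hzK, dist_self]
    positivity

/-- Let `K` be nonempty compact, `P` finite and disjoint from `K` with
`η := dist(K,P) > 0`, let `f : ℓ_∞(K) → K` be Lipschitz with constant `L`
(for the supremum metric on `K`-valued sequences), and `x ∈ K`.  The extension
`f̃ : ℓ_∞(K ∪ P) → K ∪ P` defined by `f̃(x₁,x₂,...) = f(x₁,x₂,...)` if all
`x_k ∈ K` and `f̃(x₁,x₂,...) = f(x,x,...)` otherwise, is Lipschitz with constant
`L · max {1, diam(K)/η}`. -/
theorem extension_lipschitz_bound (X : Type*) [MetricSpace X]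
    (K P : Set X) (hK : IsCompact K) (hKne : K.Nonempty)
    (hPfin : P.Finite) (hdisj : Disjoint K P)
    (η : ℝ) (hη : η = SetDist K P) (hηpos : 0 < η)
    (L : ℝ) (hL : 0 ≤ L) (f : (ℕ → X) → X)
    (hmaps : ∀ y : ℕ → X, (∀ k, y k ∈ K) → f y ∈ K)
    (hlip : ∀ y z : ℕ → X, (∀ k, y k ∈ K) → (∀ k, z k ∈ K) →
      dist (f y) (f z) ≤ L * ⨆ k, dist (y k) (z k))
    (x : X) (hx : x ∈ K)
    (g : (ℕ → X) → X)
    (hg : ∀ y : ℕ → X, (∀ k, y k ∈ K) → g y = f y)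
    (hg' : ∀ y : ℕ → X, ¬ (∀ k, y k ∈ K) → g y = f fun _ => x) :
    ∀ y z : ℕ → X, (∀ k, y k ∈ K ∪ P) → (∀ k, z k ∈ K ∪ P) →
      dist (g y) (g z) ≤ L * max 1 (Metric.diam K / η) * ⨆ k, dist (y k) (z k) :=
  extension_lipschitz_bound_general X K P hK hPfin η hη hηpos L hL f hlip x hx g hg hg'
end

section
/- Let X be a metric space and S ⊆ X an open set that is dense in its closure S̄ (e.g., S a set of isolated points of X). Then K(S), the set of nonempty compact subsets of S, is open and dense in K(S̄) with respect to the Hausdorff metric. Moreover, if every point of S is isolated in X, then every element of K(S) is finite. -/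
/-!
Mathlib builds the Hausdorff metric on `NonemptyCompacts X` so that its topology is the Vietoris
topology. There `{K | K ⊆ U}` is open for open `U`, and the finite subsets of `S` are dense in the
compact subsets of `closure S`. A compact set of isolated points is discrete, hence finite.
-/

open TopologicalSpace Set

theorem Set.isDiscrete_of_forall_isOpen_singleton {X : Type*} [TopologicalSpace X] {s : Set X}
    (hs : ∀ x ∈ s, IsOpen ({x} : Set X)) : IsDiscrete s :=
  isDiscrete_iff_forall_mem_exists_isOpen.2 fun x hx => ⟨{x}, hs x hx, singleton_inter_of_mem hx⟩

theorem IsCompact.finite_of_forall_isOpen_singleton {X : Type*} [TopologicalSpace X] {K : Set X}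
    (hK : IsCompact K) (hiso : ∀ x ∈ K, IsOpen ({x} : Set X)) : K.Finite :=
  hK.finite (isDiscrete_of_forall_isOpen_singleton hiso)

namespace TopologicalSpace.NonemptyCompacts

variable {X : Type*} [TopologicalSpace X]

theorem isOpen_subsets_in_closure_of_isOpen {s : Set X} (hs : IsOpen s) :
    IsOpen {K : {K : NonemptyCompacts X // (K : Set X) ⊆ closure s} |
      ((K : NonemptyCompacts X) : Set X) ⊆ s} :=
  (isOpen_subsets_of_isOpen hs).preimage continuous_subtype_val

theorem dense_subsets_in_closure (s : Set X) :
    Dense {K : {K : NonemptyCompacts X // (K : Set X) ⊆ closure s} |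
      ((K : NonemptyCompacts X) : Set X) ⊆ s} := by
  refine Subtype.dense_iff (s := {K : NonemptyCompacts X | ↑K ⊆ closure s}).2 ?_
  refine (closure_finite_subsets s).symm.subset.trans (closure_mono ?_)
  rintro K ⟨-, hKs⟩
  exact ⟨⟨K, hKs.trans subset_closure⟩, hKs, rfl⟩

end TopologicalSpace.NonemptyCompacts

/-- If `S` is open (hence dense in its closure `S̄`), then `K(S)` is open and dense
in `K(S̄)` (the hyperspace of nonempty compact subsets with the Hausdorff metric).
Moreover, if every point of `S` is isolated in `X`, every element of `K(S)` is
finite. -/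
theorem hyperspace_of_open_dense_in_closure (X : Type*) [MetricSpace X]
    (S : Set X) (hS : IsOpen S) :
    IsOpen {F : {F : TopologicalSpace.NonemptyCompacts X // (F : Set X) ⊆ closure S} |
        ((F : TopologicalSpace.NonemptyCompacts X) : Set X) ⊆ S} ∧
    Dense {F : {F : TopologicalSpace.NonemptyCompacts X // (F : Set X) ⊆ closure S} |
        ((F : TopologicalSpace.NonemptyCompacts X) : Set X) ⊆ S} ∧
    ((∀ x ∈ S, IsOpen ({x} : Set X)) →
      ∀ F : TopologicalSpace.NonemptyCompacts X, (F : Set X) ⊆ S → (F : Set X).Finite) :=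
  ⟨NonemptyCompacts.isOpen_subsets_in_closure_of_isOpen hS,
    NonemptyCompacts.dense_subsets_in_closure S,
    fun hiso F hFS => F.isCompact.finite_of_forall_isOpen_singleton fun x hx => hiso x (hFS hx)⟩
end
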